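/- Let 𝐤∈ℕ[Φ]^W and w∈W. Then for all λ,μ∈P: (λ→_{sym,𝐤}μ or μ→_{sym,𝐤}λ) if and only if (w(λ)→_{sym,𝐤}w(μ) or w(μ)→_{sym,𝐤}w(λ)). That is, every Weyl group element is an automorphism of the undirected graph of symmetric interval-firing. -/

import Mathlib

open RealInnerProductSpace Pointwise

noncomputable section

variable {V : Type*} [NormedAddCommGroup V] [InnerProductSpace ℝ V]

/-- The coroot `α∨ = 2α/⟨α,α⟩` associated to a vector `α`. -/
def coroot (α : V) : V := (2 / ⟪α, α⟫) • α

/-- The reflection `s_α(v) = v − ⟨v,α∨⟩α` across the hyperplane orthogonal to `α`. -/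
def sRefl (α : V) (v : V) : V := v - ⟪v, coroot α⟫ • α

/-- An irreducible reduced crystallographic root system in the real inner product
space `V`, together with a chosen set of positive roots and simple roots. -/
structure RootSystemData (V : Type*) [NormedAddCommGroup V] [InnerProductSpace ℝ V] where
  n : ℕ
  roots : Set V
  roots_finite : roots.Finite
  roots_nonzero : (0 : V) ∉ roots
  roots_span : Submodule.span ℝ roots = ⊤
  refl_mem : ∀ α ∈ roots, ∀ β ∈ roots, sRefl α β ∈ roots
  reduced : ∀ α ∈ roots, ∀ c : ℝ, c • α ∈ roots → c • α = α ∨ c • α = -α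
  crystallographic : ∀ α ∈ roots, ∀ β ∈ roots, ∃ m : ℤ, ⟪β, coroot α⟫ = (m : ℝ)
  pos : Set V
  pos_subset : pos ⊆ roots
  pos_union : roots = pos ∪ (-pos)
  simple : Fin n → V
  simple_mem : ∀ i, simple i ∈ pos
  simple_li : LinearIndependent ℝ simple
  simple_span : Submodule.span ℝ (Set.range simple) = ⊤
  pos_combo : ∀ α ∈ pos, ∃ c : Fin n → ℕ, α = ∑ i, (c i : ℝ) • simple i
  irred : ∀ S₁ S₂ : Set V, roots = S₁ ∪ S₂ →
    (∀ α ∈ S₁, ∀ β ∈ S₂, ⟪α, β⟫ = 0) → S₁ = ∅ ∨ S₂ = ∅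

namespace RootSystemData

variable (R : RootSystemData V)

/-- The Weyl group `W`: all finite compositions of reflections in roots. -/
def weyl : Set (V → V) :=
  {w | ∃ l : List V, (∀ α ∈ l, α ∈ R.roots) ∧ w = (l.map sRefl).foldr (· ∘ ·) id}

/-- The orbit `W(v)` of a vector under the Weyl group. -/
def orbit (v : V) : Set V := {u | ∃ w ∈ R.weyl, u = w v}

/-- The weight lattice `P`. -/
def weightLattice : Set V :=
  {v | ∀ α ∈ R.roots, ∃ m : ℤ, ⟪v, coroot α⟫ = (m : ℝ)}

/-- The permutohedron `Π(v) = ConvexHull W(v)`. -/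
def perm (v : V) : Set V := convexHull ℝ (R.orbit v)

/-- The discrete permutohedron `Π^Q(λ) = Π(λ) ∩ (Q+λ)`. -/
def permQ (lam : V) : Set V :=
  R.perm lam ∩ {v | v - lam ∈ Submodule.span ℤ R.roots}

/-- Dominance: nonnegative pairing with all simple coroots. -/
def IsDominant (v : V) : Prop := ∀ i, 0 ≤ ⟪v, coroot (R.simple i)⟫

/-- `W`-invariance of a function `𝐤 : Φ → ℕ`. -/
def IsWInvariant (k : V → ℕ) : Prop := ∀ w ∈ R.weyl, ∀ α ∈ R.roots, k (w α) = k α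

/-- Symmetric interval-firing: `λ → λ+α` for `α ∈ Φ⁺` whenever
`⟨λ,α∨⟩+1 ∈ {−𝐤(α),…,𝐤(α)}`. -/
def symFire (k : V → ℕ) (lam mu : V) : Prop :=
  lam ∈ R.weightLattice ∧ ∃ α ∈ R.pos, mu = lam + α ∧
    -(k α : ℝ) ≤ ⟪lam, coroot α⟫ + 1 ∧ ⟪lam, coroot α⟫ + 1 ≤ (k α : ℝ)

/-- Truncated interval-firing: `λ → λ+α` for `α ∈ Φ⁺` whenever
`⟨λ,α∨⟩+1 ∈ {−𝐤(α)+1,…,𝐤(α)}`. -/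
def trFire (k : V → ℕ) (lam mu : V) : Prop :=
  lam ∈ R.weightLattice ∧ ∃ α ∈ R.pos, mu = lam + α ∧
    -(k α : ℝ) + 1 ≤ ⟪lam, coroot α⟫ + 1 ∧ ⟪lam, coroot α⟫ + 1 ≤ (k α : ℝ)

/-- All roots have the same length. -/
def SimplyLaced : Prop := ∀ α ∈ R.roots, ∀ β ∈ R.roots, ‖α‖ = ‖β‖

/-- A root of maximal length. -/
def IsLongRoot (α : V) : Prop := α ∈ R.roots ∧ ∀ β ∈ R.roots, ‖β‖ ≤ ‖α‖

/-- A root which is not of maximal length. -/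
def IsShortRoot (α : V) : Prop := α ∈ R.roots ∧ ¬ R.IsLongRoot α

/-- `𝐤` is good: either `Φ` is simply laced, or `𝐤` vanishing on short roots
implies `𝐤` vanishing on all (in particular long) roots. -/
def IsGood (k : V → ℕ) : Prop :=
  R.SimplyLaced ∨ ((∀ α, R.IsShortRoot α → k α = 0) → ∀ β ∈ R.roots, k β = 0)

/-- The product of the simple reflections indexed by a word. -/
def wordProd (l : List (Fin R.n)) : V → V :=
  (l.map (fun i => sRefl (R.simple i))).foldr (· ∘ ·) id

/-- Coxeter length: the minimal length of a word in the simple reflections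
expressing `w`. -/
def coxLen (w : V → V) : ℕ :=
  sInf {m : ℕ | ∃ l : List (Fin R.n), l.length = m ∧ w = R.wordProd l}

/-- The parabolic subgroup `W_I`: all compositions of simple reflections `s_{αᵢ}`, `i ∈ I`. -/
def weylI (I : Set (Fin R.n)) : Set (V → V) :=
  {w | ∃ l : List (Fin R.n), (∀ i ∈ l, i ∈ I) ∧ w = R.wordProd l}

/-- The orbit `W_I(v)`. -/
def orbitI (I : Set (Fin R.n)) (v : V) : Set V := {u | ∃ w ∈ R.weylI I, u = w v}

/-- The discrete parabolic permutohedron `Π^Q_I(λ)`. -/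
def permQI (I : Set (Fin R.n)) (lam : V) : Set V :=
  convexHull ℝ (R.orbitI I lam) ∩ {v | v - lam ∈ Submodule.span ℤ R.roots}

/-- Given a choice `dm` of dominant representatives, `I^{0,1}_λ` is the set of
indices `i` with `⟨λ_dom, αᵢ∨⟩ ∈ {0,1}`. -/
def I01 (dm : V → V) (lam : V) : Set (Fin R.n) :=
  {i | ⟪dm lam, coroot (R.simple i)⟫ = 0 ∨ ⟪dm lam, coroot (R.simple i)⟫ = 1}

/-- The minimal length of an `α`-traverse in `Π^Q(λ)`. -/
def traverseLen (lam α : V) : ℕ :=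
  sInf {ℓ : ℕ | ∃ mu : V, (∀ i : ℕ, i ≤ ℓ → mu - (i : ℝ) • α ∈ R.permQ lam) ∧
    mu + α ∉ R.permQ lam ∧ mu - ((ℓ : ℝ) + 1) • α ∉ R.permQ lam}

/-- `m_λ(α) = min {cᵢ : αᵢ ∈ W(α)}` where `λ = Σ cᵢ ωᵢ` is dominant,
i.e. `cᵢ = ⟨λ, αᵢ∨⟩`. -/
def mVal (lam α : V) : ℕ :=
  sInf {c : ℕ | ∃ i, R.simple i ∈ R.orbit α ∧ (c : ℝ) = ⟪lam, coroot (R.simple i)⟫}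

/-- Funny weights (only exist when `Φ` is not simply laced). -/
def IsFunny (lam : V) : Prop :=
  ¬ R.SimplyLaced ∧ ∃ l s : Fin R.n, R.IsLongRoot (R.simple l) ∧ R.IsShortRoot (R.simple s) ∧
    ⟪R.simple l, coroot (R.simple s)⟫ ≠ 0 ∧
    ⟪lam, coroot (R.simple s)⟫ = 0 ∧ 1 ≤ ⟪lam, coroot (R.simple l)⟫ ∧
    ∀ i, R.IsLongRoot (R.simple i) → ⟪lam, coroot (R.simple l)⟫ ≤ ⟪lam, coroot (R.simple i)⟫

end RootSystemData

/-- The map `η_𝐤(λ) = λ + w_λ(ρ_𝐤)`, relative to a choice `fw` of fundamental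
weights and a choice `wl` of minimal-length Weyl elements `λ ↦ w_λ`. -/
def etaMap (R : RootSystemData V) (fw : Fin R.n → V) (wl : V → V → V)
    (k : V → ℕ) (lam : V) : V :=
  lam + wl lam (∑ i, (k (R.simple i) : ℝ) • fw i)

/-- Two points are in the same connected component of a relation if they are
related by its reflexive-transitive-symmetric closure. -/
def SameComponent (r : V → V → Prop) (x y : V) : Prop :=
  Relation.ReflTransGen (fun a b => r a b ∨ r b a) x y

/-!
The Weyl group is generated by the reflections `s_γ`, so it suffices to treat one of them.
A reflection preserves the pairings, `⟨s_γ λ, (s_γ α)∨⟩ = ⟨λ, α∨⟩`, and `𝐤` is `W`-invariant, so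
a move `λ → λ + α` is sent to the move `s_γ λ → s_γ λ + s_γ α` when `s_γ α` is positive. Otherwise
it is sent to the reversed edge `s_γ μ → s_γ μ - s_γ α` with `μ = λ + α`, whose firing value
`⟨s_γ μ, (-s_γ α)∨⟩ + 1 = -(⟨λ, α∨⟩ + 1)` lies in `{-𝐤(α), …, 𝐤(α)}` exactly because that interval
is symmetric.
-/

lemma inner_coroot_self {α : V} (hα : α ≠ 0) : ⟪α, coroot α⟫ = 2 := by
  rw [coroot, real_inner_smul_right]
  field_simp [inner_self_ne_zero.mpr hα]

lemma coroot_neg (β : V) : coroot (-β) = -coroot β := by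
  simp [coroot]

lemma sRefl_add (α u v : V) : sRefl α (u + v) = sRefl α u + sRefl α v := by
  simp only [sRefl, inner_add_left, add_smul]
  abel

lemma sRefl_smul (α : V) (c : ℝ) (v : V) : sRefl α (c • v) = c • sRefl α v := by
  simp only [sRefl, real_inner_smul_left, smul_sub, mul_smul]

lemma sRefl_self {α : V} (hα : α ≠ 0) : sRefl α α = -α := by
  rw [sRefl, inner_coroot_self hα, two_smul]
  abel

lemma sRefl_sRefl {α : V} (hα : α ≠ 0) (v : V) : sRefl α (sRefl α v) = v := by
  simp only [sRefl, inner_sub_left, real_inner_smul_left, inner_coroot_self hα, sub_smul]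
  module

lemma inner_sRefl_sRefl {α : V} (hα : α ≠ 0) (u v : V) :
    ⟪sRefl α u, sRefl α v⟫ = ⟪u, v⟫ := by
  have hαα : ⟪α, α⟫ ≠ 0 := inner_self_ne_zero.mpr hα
  simp only [sRefl, coroot, real_inner_smul_right, inner_sub_left, inner_sub_right,
    real_inner_smul_left, real_inner_comm α v]
  field_simp
  ring

lemma coroot_sRefl {α : V} (hα : α ≠ 0) (β : V) :
    coroot (sRefl α β) = sRefl α (coroot β) := by
  rw [coroot, coroot, inner_sRefl_sRefl hα, sRefl_smul]

lemma inner_sRefl_coroot_sRefl {α : V} (hα : α ≠ 0) (u β : V) :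
    ⟪sRefl α u, coroot (sRefl α β)⟫ = ⟪u, coroot β⟫ := by
  rw [coroot_sRefl hα, inner_sRefl_sRefl hα]

namespace RootSystemData

variable (R : RootSystemData V)

lemma ne_zero_of_mem_roots {γ : V} (hγ : γ ∈ R.roots) : γ ≠ 0 :=
  fun h => R.roots_nonzero (h ▸ hγ)

lemma sRefl_mem_weyl {γ : V} (hγ : γ ∈ R.roots) : sRefl γ ∈ R.weyl :=
  ⟨[γ], by simpa using hγ, rfl⟩

lemma roots_subset_weightLattice : R.roots ⊆ R.weightLattice :=
  fun β hβ α hα => R.crystallographic α hα β hβ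

lemma add_mem_weightLattice {u v : V} (hu : u ∈ R.weightLattice) (hv : v ∈ R.weightLattice) :
    u + v ∈ R.weightLattice := by
  intro α hα
  obtain ⟨m, hm⟩ := hu α hα
  obtain ⟨m', hm'⟩ := hv α hα
  exact ⟨m + m', by rw [inner_add_left, hm, hm', Int.cast_add]⟩

lemma sRefl_mem_weightLattice {γ : V} (hγ : γ ∈ R.roots) {u : V}
    (hu : u ∈ R.weightLattice) : sRefl γ u ∈ R.weightLattice := by
  intro α hα
  have hγ0 := R.ne_zero_of_mem_roots hγ
  obtain ⟨m, hm⟩ := hu _ (R.refl_mem γ hγ α hα)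
  refine ⟨m, ?_⟩
  rw [← hm, ← inner_sRefl_coroot_sRefl hγ0, sRefl_sRefl hγ0]

variable {R}

lemma IsWInvariant.apply_neg {k : V → ℕ} (hk : R.IsWInvariant k) {α : V} (hα : α ∈ R.roots) :
    k (-α) = k α := by
  simpa [sRefl_self (R.ne_zero_of_mem_roots hα)] using hk _ (R.sRefl_mem_weyl hα) α hα

lemma symFire.right_mem_weightLattice {k : V → ℕ} {lam mu : V} (h : R.symFire k lam mu) :
    mu ∈ R.weightLattice := by
  obtain ⟨hlam, α, hα, rfl, -⟩ := h
  exact R.add_mem_weightLattice hlam (R.roots_subset_weightLattice (R.pos_subset hα))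

variable (R)

def symAdj (k : V → ℕ) (lam mu : V) : Prop := R.symFire k lam mu ∨ R.symFire k mu lam

variable {R}

lemma symAdj_comm {k : V → ℕ} {lam mu : V} : R.symAdj k lam mu ↔ R.symAdj k mu lam :=
  Or.comm

lemma symFire.symAdj_sRefl {k : V → ℕ} (hk : R.IsWInvariant k) {γ : V} (hγ : γ ∈ R.roots)
    {lam mu : V} (h : R.symFire k lam mu) : R.symAdj k (sRefl γ lam) (sRefl γ mu) := by
  have hmu := h.right_mem_weightLattice
  obtain ⟨hlam, α, hαpos, rfl, hlow, hhigh⟩ := h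
  have hγ0 := R.ne_zero_of_mem_roots hγ
  have hα := R.pos_subset hαpos
  have hsα := R.refl_mem γ hγ α hα
  have hk_sα : k (sRefl γ α) = k α := hk _ (R.sRefl_mem_weyl hγ) α hα
  have hpair : ⟪sRefl γ lam, coroot (sRefl γ α)⟫ = ⟪lam, coroot α⟫ :=
    inner_sRefl_coroot_sRefl hγ0 lam α
  rcases (R.pos_union ▸ hsα : sRefl γ α ∈ R.pos ∪ -R.pos) with hpos | hneg
  · refine Or.inl ⟨R.sRefl_mem_weightLattice hγ hlam, sRefl γ α, hpos, sRefl_add _ _ _, ?_, ?_⟩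
      <;> rwa [hpair, hk_sα]
  · have hpair' : ⟪sRefl γ (lam + α), coroot (-sRefl γ α)⟫ = -(⟪lam, coroot α⟫ + 2) := by
      rw [coroot_neg, inner_neg_right, inner_sRefl_coroot_sRefl hγ0, inner_add_left,
        inner_coroot_self (R.ne_zero_of_mem_roots hα)]
    have hk_neg : k (-sRefl γ α) = k α := (hk.apply_neg hsα).trans hk_sα
    refine Or.inr ⟨R.sRefl_mem_weightLattice hγ hmu, -sRefl γ α, hneg, ?_, ?_, ?_⟩
    · rw [sRefl_add]
      abel
    · rw [hpair', hk_neg]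
      linarith
    · rw [hpair', hk_neg]
      linarith

lemma symAdj_sRefl_iff {k : V → ℕ} (hk : R.IsWInvariant k) {γ : V} (hγ : γ ∈ R.roots)
    {lam mu : V} : R.symAdj k (sRefl γ lam) (sRefl γ mu) ↔ R.symAdj k lam mu := by
  have hmap : ∀ {x y : V}, R.symAdj k x y → R.symAdj k (sRefl γ x) (sRefl γ y) := by
    rintro x y (h | h)
    · exact h.symAdj_sRefl hk hγ
    · exact symAdj_comm.mp (h.symAdj_sRefl hk hγ)
  refine ⟨fun h => ?_, hmap⟩
  simpa only [sRefl_sRefl (R.ne_zero_of_mem_roots hγ)] using hmap h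

lemma symAdj_weyl_iff {k : V → ℕ} (hk : R.IsWInvariant k) {w : V → V} (hw : w ∈ R.weyl)
    {lam mu : V} : R.symAdj k (w lam) (w mu) ↔ R.symAdj k lam mu := by
  obtain ⟨l, hl, rfl⟩ := hw
  induction l with
  | nil => rfl
  | cons γ l ih =>
    simp only [List.map_cons, List.foldr_cons, Function.comp_apply]
    rw [symAdj_sRefl_iff hk (hl γ List.mem_cons_self), ih fun α hα => hl α (.tail _ hα)]

end RootSystemData

theorem statement2_general (R : RootSystemData V) (k : V → ℕ) (hk : R.IsWInvariant k)
    (w : V → V) (hw : w ∈ R.weyl)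
    (lam mu : V) :
    (R.symFire k lam mu ∨ R.symFire k mu lam) ↔
      (R.symFire k (w lam) (w mu) ∨ R.symFire k (w mu) (w lam)) :=
  (R.symAdj_weyl_iff hk hw).symm

/-- Every Weyl group element is an automorphism of the undirected graph of
symmetric interval-firing. -/
theorem statement2 (R : RootSystemData V) (k : V → ℕ) (hk : R.IsWInvariant k)
    (w : V → V) (hw : w ∈ R.weyl)
    (lam mu : V) (hlam : lam ∈ R.weightLattice) (hmu : mu ∈ R.weightLattice) :
    (R.symFire k lam mu ∨ R.symFire k mu lam) ↔
      (R.symFire k (w lam) (w mu) ∨ R.symFire k (w mu) (w lam)) :=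
  statement2_general R k hk w hw lam mu
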